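/- Let p(t) = t^n - c_1 t^{n-1} - ... - c_n with all c_k ≥ 0, let I be the set of indices k with c_k ≠ 0, and let d = gcd of the elements of I. Then p is spectrally Perron if and only if d = 1. -/

import Mathlib

open Matrix Polynomial Finset

/-- The polynomial `p(t) = t^n - c 1 * t^(n-1) - ⋯ - c n`. -/
noncomputable def polyOf (n : ℕ) (c : ℕ → ℝ) : Polynomial ℝ :=
  X ^ n - ∑ k ∈ Finset.Icc 1 n, Polynomial.C (c k) * X ^ (n - k)

/-- Companion matrix of `p(t) = t^n - c 1 * t^(n-1) - ⋯ - c n`: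
ones on the superdiagonal, last row `(c n, c (n-1), …, c 1)`, zeros elsewhere. -/
def companionOf (n : ℕ) (c : ℕ → ℝ) : Matrix (Fin n) (Fin n) ℝ :=
  fun i j => if (i : ℕ) + 1 = (j : ℕ) then 1
    else if (i : ℕ) = n - 1 then c (n - (j : ℕ)) else 0

/-- The characteristic polynomial of a real matrix, viewed over `ℂ`. -/
noncomputable def specPoly {n : ℕ} (A : Matrix (Fin n) (Fin n) ℝ) : Polynomial ℂ :=
  A.charpoly.map (algebraMap ℝ ℂ)

/-- `A` is spectrally Perron: it has a simple positive real eigenvalue `ρ`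
strictly exceeding the modulus of every other eigenvalue. -/
def SpectrallyPerron {n : ℕ} (A : Matrix (Fin n) (Fin n) ℝ) : Prop :=
  ∃ ρ : ℝ, 0 < ρ ∧ (specPoly A).rootMultiplicity (ρ : ℂ) = 1 ∧
    ∀ z : ℂ, (specPoly A).IsRoot z → z ≠ (ρ : ℂ) → ‖z‖ < ρ

/-- `A` is weakly spectrally Perron: it has a simple positive real eigenvalue `ρ`
with `ρ ≥ |λ|` for every eigenvalue `λ` of `A`. -/
def WeaklySpectrallyPerron {n : ℕ} (A : Matrix (Fin n) (Fin n) ℝ) : Prop :=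
  ∃ ρ : ℝ, 0 < ρ ∧ (specPoly A).rootMultiplicity (ρ : ℂ) = 1 ∧
    ∀ z : ℂ, (specPoly A).IsRoot z → ‖z‖ ≤ ρ

/-! For `z ≠ 0`, `p(z) = 0` iff `∑ c_k z⁻ᵏ = 1`. On `(0, ∞)` the left side is strictly
decreasing, so `p` has exactly one positive root `ρ`; it is simple because
`ρ p'(ρ) = ∑ k c_k ρ^(n-k) > 0`. By the triangle inequality every root satisfies `‖z‖ ≤ ρ`, and
equality forces `z^k = ρ^k` whenever `c_k ≠ 0`, so `z / ρ` is a root of unity of order dividing `d`.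
Conversely, if `ω` is a primitive `d`-th root of unity then `p(ω z) = ωⁿ p(z)`, so for `d > 1`
the root `ω ρ ≠ ρ` has the same modulus as `ρ`. -/

lemma polyOf_succ (n : ℕ) (c : ℕ → ℝ) :
    polyOf (n + 1) c = X * polyOf n c - C (c (n + 1)) := by
  have hsum : ∑ k ∈ Icc 1 n, C (c k) * X ^ (n + 1 - k) =
      X * ∑ k ∈ Icc 1 n, C (c k) * X ^ (n - k) := by
    rw [mul_sum]
    refine sum_congr rfl fun k hk => ?_
    rw [Nat.sub_add_comm (mem_Icc.mp hk).2, pow_succ]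
    ring
  rw [polyOf, polyOf, sum_Icc_succ_top (by omega), hsum, Nat.sub_self, pow_zero, mul_one]
  ring

section companionOf

variable (m : ℕ) (c : ℕ → ℝ)

lemma charmatrix_companionOf_submatrix_succ :
    (charmatrix (companionOf (m + 2) c)).submatrix Fin.succ Fin.succ =
      charmatrix (companionOf (m + 1) c) := by
  ext i j
  rcases eq_or_ne i j with rfl | hij
  · simp [charmatrix_apply_eq, companionOf]
  · rw [submatrix_apply, charmatrix_apply_ne _ _ _ (Fin.succ_injective _ |>.ne hij),
      charmatrix_apply_ne _ _ _ hij]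
    simp only [companionOf, Fin.val_succ, show m + 2 - (j + 1 : ℕ) = m + 1 - j by omega]
    split_ifs <;> first | rfl | omega

lemma det_charmatrix_companionOf_submatrix_castSucc_succ :
    ((charmatrix (companionOf (m + 2) c)).submatrix Fin.castSucc Fin.succ).det =
      (-1) ^ (m + 1) := by
  have hlower : ((charmatrix (companionOf (m + 2) c)).submatrix Fin.castSucc Fin.succ)
      |>.BlockTriangular OrderDual.toDual := by
    intro i j (hij : (i : ℕ) < j)
    rw [submatrix_apply, charmatrix_apply_ne _ _ _ (by simp [Fin.ext_iff]; omega)]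
    simp [companionOf, hij.ne, show (i : ℕ) ≠ m + 1 by omega]
  rw [det_of_isLowerTriangular _ hlower]
  simp [charmatrix_apply_ne, Fin.ext_iff, companionOf]

lemma charpoly_companionOf_add_two :
    (companionOf (m + 2) c).charpoly = X * (companionOf (m + 1) c).charpoly - C (c (m + 2)) := by
  have hcol : ∀ i : Fin m, charmatrix (companionOf (m + 2) c) i.castSucc.succ 0 = 0 := by
    intro i
    rw [charmatrix_apply_ne _ _ _ (Fin.succ_ne_zero _)]
    simp [companionOf, i.isLt.ne]
  have h00 : charmatrix (companionOf (m + 2) c) 0 0 = X := by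
    simp [charmatrix_apply_eq, companionOf]
  have hlast : charmatrix (companionOf (m + 2) c) (Fin.last (m + 1)) 0 = -C (c (m + 2)) := by
    simp [companionOf]
  rw [charpoly, det_succ_column_zero, Fin.sum_univ_succ, Fin.sum_univ_castSucc]
  simp only [hcol, mul_zero, zero_mul, sum_const_zero, zero_add, Fin.succAbove_zero,
    charmatrix_companionOf_submatrix_succ, Fin.succ_last, Fin.succAbove_last,
    det_charmatrix_companionOf_submatrix_castSucc_succ, h00, hlast, Fin.val_zero, Fin.val_last,
    pow_zero, one_mul]
  rw [mul_neg, neg_mul, mul_right_comm, ← pow_add, Even.neg_one_pow ⟨m + 1, rfl⟩, one_mul,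
    ← sub_eq_add_neg, charpoly]

end companionOf

lemma charpoly_companionOf (n : ℕ) (c : ℕ → ℝ) : (companionOf n c).charpoly = polyOf n c := by
  induction n using Nat.twoStepInduction with
  | zero => simp [charpoly_isEmpty, polyOf]
  | one => simp [charpoly, charmatrix_apply_eq, companionOf, polyOf]
  | more m _ ih => rw [charpoly_companionOf_add_two, ih, polyOf_succ (m + 1)]

lemma polyOf_monic (n : ℕ) (c : ℕ → ℝ) : (polyOf n c).Monic :=
  charpoly_companionOf n c ▸ charpoly_monic _

lemma specPoly_companionOf (n : ℕ) (c : ℕ → ℝ) :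
    specPoly (companionOf n c) = (polyOf n c).map (algebraMap ℝ ℂ) := by
  rw [specPoly, charpoly_companionOf]

lemma eval_polyOf (n : ℕ) (c : ℕ → ℝ) (t : ℝ) :
    (polyOf n c).eval t = t ^ n - ∑ k ∈ Icc 1 n, c k * t ^ (n - k) := by
  simp [polyOf, eval_finsetSum]

lemma eval_map_polyOf (n : ℕ) (c : ℕ → ℝ) (z : ℂ) :
    ((polyOf n c).map (algebraMap ℝ ℂ)).eval z =
      z ^ n - ∑ k ∈ Icc 1 n, (c k : ℂ) * z ^ (n - k) := by
  simp [polyOf]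

lemma pow_sub_sum_mul_pow_eq_zero_iff {K : Type*} [Field K] {n : ℕ} {a : ℕ → K} {z : K}
    (hz : z ≠ 0) :
    z ^ n - ∑ k ∈ Icc 1 n, a k * z ^ (n - k) = 0 ↔ ∑ k ∈ Icc 1 n, a k * z⁻¹ ^ k = 1 := by
  have hsum : ∑ k ∈ Icc 1 n, a k * z ^ (n - k) = z ^ n * ∑ k ∈ Icc 1 n, a k * z⁻¹ ^ k := by
    rw [mul_sum]
    refine sum_congr rfl fun k hk => ?_
    rw [pow_sub₀ _ hz (mem_Icc.mp hk).2, inv_pow]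
    ring
  rw [hsum, sub_eq_zero, eq_comm, mul_eq_left₀ (pow_ne_zero _ hz)]

lemma eval_map_polyOf_mul {n : ℕ} {c : ℕ → ℝ} {ζ : ℂ} (hζ : ∀ k ∈ Icc 1 n, c k ≠ 0 → ζ ^ k = 1)
    (z : ℂ) :
    ((polyOf n c).map (algebraMap ℝ ℂ)).eval (ζ * z) =
      ζ ^ n * ((polyOf n c).map (algebraMap ℝ ℂ)).eval z := by
  rw [eval_map_polyOf, eval_map_polyOf, mul_sub, mul_pow, mul_sum]
  congr 1
  refine sum_congr rfl fun k hk => ?_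
  rcases eq_or_ne (c k) 0 with hck | hck
  · simp [hck]
  · have hζnk : ζ ^ (n - k) = ζ ^ n := by
      rw [← mul_one (ζ ^ (n - k)), ← hζ k hk hck, ← pow_add, Nat.sub_add_cancel (mem_Icc.mp hk).2]
    rw [mul_pow, hζnk]
    ring

lemma mul_eval_derivative_polyOf (n : ℕ) (c : ℕ → ℝ) (t : ℝ) :
    t * (derivative (polyOf n c)).eval t =
      n * (polyOf n c).eval t + ∑ k ∈ Icc 1 n, k * c k * t ^ (n - k) := by
  have hpow : ∀ m : ℕ, t * (m * t ^ (m - 1)) = m * t ^ m := by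
    rintro (_ | m)
    · simp
    · rw [Nat.add_sub_cancel, pow_succ]
      ring
  have hterm : ∀ k ∈ Icc 1 n, t * (c k * ((n - k : ℕ) * t ^ (n - k - 1))) =
      n * (c k * t ^ (n - k)) - k * c k * t ^ (n - k) := by
    intro k hk
    rw [mul_left_comm, hpow, Nat.cast_sub (mem_Icc.mp hk).2]
    ring
  simp only [polyOf, derivative_sub, derivative_X_pow, derivative_sum, derivative_C_mul,
    eval_sub, eval_mul, eval_C, eval_pow, eval_X, eval_finsetSum]
  rw [mul_sub, hpow, mul_sum, sum_congr rfl hterm, sum_sub_distrib, ← mul_sum]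
  ring

lemma rootMultiplicity_polyOf_eq_one {n : ℕ} {c : ℕ → ℝ} (hc : ∀ k ∈ Icc 1 n, 0 ≤ c k) {ρ : ℝ}
    (hρ : 0 < ρ) (hroot : (polyOf n c).IsRoot ρ) : (polyOf n c).rootMultiplicity ρ = 1 := by
  have hP := (polyOf_monic n c).ne_zero
  have hderiv : ¬(derivative (polyOf n c)).IsRoot ρ := by
    intro h
    have hid := mul_eval_derivative_polyOf n c ρ
    rw [h.eq_zero, hroot.eq_zero, mul_zero, mul_zero, zero_add] at hid
    rw [IsRoot, eval_polyOf, sub_eq_zero] at hroot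
    have hle : ρ ^ n ≤ ∑ k ∈ Icc 1 n, k * c k * ρ ^ (n - k) := by
      rw [hroot]
      refine sum_le_sum fun k hk => ?_
      rw [mul_assoc]
      exact le_mul_of_one_le_left (mul_nonneg (hc k hk) (pow_nonneg hρ.le _))
        (Nat.one_le_cast.mpr (mem_Icc.mp hk).1)
    linarith [pow_pos hρ n]
  have hpos := (rootMultiplicity_pos hP).mpr hroot
  have hle := (one_lt_rootMultiplicity_iff_isRoot hP).not.mpr (by tauto)
  omega

section NonnegWeights

variable {s : Finset ℕ} {c : ℕ → ℝ}

lemma strictMonoOn_sum_mul_pow (hs : 0 ∉ s) (hc : ∀ k ∈ s, 0 ≤ c k) {m : ℕ} (hm : m ∈ s)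
    (hcm : c m ≠ 0) : StrictMonoOn (fun u : ℝ => ∑ k ∈ s, c k * u ^ k) (Set.Ici 0) := by
  intro u (hu : 0 ≤ u) v _ huv
  refine sum_lt_sum (fun k hk => ?_) ⟨m, hm, ?_⟩
  · exact mul_le_mul_of_nonneg_left (pow_le_pow_left₀ hu huv.le k) (hc k hk)
  · exact mul_lt_mul_of_pos_left (pow_lt_pow_left₀ huv hu (ne_of_mem_of_not_mem hm hs))
      ((hc m hm).lt_of_ne' hcm)

lemma exists_pos_sum_mul_pow_eq_one (hs : 0 ∉ s) (hc : ∀ k ∈ s, 0 ≤ c k) {m : ℕ} (hm : m ∈ s)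
    (hcm : c m ≠ 0) : ∃ u > 0, ∑ k ∈ s, c k * u ^ k = 1 := by
  set b : ℝ := max 1 (c m)⁻¹
  have hb : 1 ≤ b := le_max_left _ _
  have hzero : ∑ k ∈ s, c k * (0 : ℝ) ^ k = 0 :=
    sum_eq_zero fun k hk => by rw [zero_pow (ne_of_mem_of_not_mem hk hs), mul_zero]
  have hone : 1 ≤ ∑ k ∈ s, c k * b ^ k := calc
    1 = c m * (c m)⁻¹ := (mul_inv_cancel₀ hcm).symm
    _ ≤ c m * b ^ m := mul_le_mul_of_nonneg_left
        ((le_max_right _ _).trans (le_self_pow₀ hb (ne_of_mem_of_not_mem hm hs))) (hc m hm)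
    _ ≤ ∑ k ∈ s, c k * b ^ k :=
        single_le_sum (fun k hk => mul_nonneg (hc k hk) (pow_nonneg (by positivity) k)) hm
  obtain ⟨u, hu, hu1⟩ := intermediate_value_Icc (zero_le_one.trans hb)
    (f := fun u : ℝ => ∑ k ∈ s, c k * u ^ k) (by fun_prop) ⟨hzero.trans_le zero_le_one, hone⟩
  refine ⟨u, hu.1.lt_of_ne ?_, hu1⟩
  rintro rfl
  exact zero_ne_one (hzero.symm.trans hu1)

lemma norm_sum_mul_pow_le (hc : ∀ k ∈ s, 0 ≤ c k) (w : ℂ) :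
    ‖∑ k ∈ s, (c k : ℂ) * w ^ k‖ ≤ ∑ k ∈ s, c k * ‖w‖ ^ k :=
  (norm_sum_le _ _).trans_eq <| sum_congr rfl fun k hk => by
    rw [norm_mul, norm_pow, Complex.norm_real, Real.norm_of_nonneg (hc k hk)]

lemma le_norm_of_sum_mul_pow_eq_one (hs : 0 ∉ s) (hc : ∀ k ∈ s, 0 ≤ c k) {u : ℝ} (hu : 0 ≤ u)
    (hcu : ∑ k ∈ s, c k * u ^ k = 1) {w : ℂ} (hw : ∑ k ∈ s, (c k : ℂ) * w ^ k = 1) :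
    u ≤ ‖w‖ := by
  obtain ⟨m, hm, hcm⟩ : ∃ m ∈ s, c m ≠ 0 := by
    obtain ⟨m, hm, hcm⟩ := exists_ne_zero_of_sum_ne_zero (hcu.trans_ne one_ne_zero)
    exact ⟨m, hm, left_ne_zero_of_mul hcm⟩
  by_contra! hlt
  have hmono := strictMonoOn_sum_mul_pow hs hc hm hcm (norm_nonneg w) hu hlt
  have htri := norm_sum_mul_pow_le hc w
  rw [hw, norm_one] at htri
  simp only [hcu] at hmono
  linarith

lemma pow_eq_norm_pow_of_sum_mul_pow_eq_one (hc : ∀ k ∈ s, 0 ≤ c k) {w : ℂ}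
    (hw : ∑ k ∈ s, (c k : ℂ) * w ^ k = 1) (hnorm : ∑ k ∈ s, c k * ‖w‖ ^ k = 1) {k : ℕ}
    (hk : k ∈ s) (hck : c k ≠ 0) : w ^ k = (‖w‖ : ℂ) ^ k := by
  have hle : ∀ k ∈ s, c k * (w ^ k).re ≤ c k * ‖w‖ ^ k := fun k hk =>
    mul_le_mul_of_nonneg_left ((Complex.re_le_norm _).trans_eq (norm_pow w k)) (hc k hk)
  have hre : ∑ k ∈ s, c k * (w ^ k).re = ∑ k ∈ s, c k * ‖w‖ ^ k := by
    rw [hnorm, ← Complex.one_re, ← hw, Complex.re_sum]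
    simp only [Complex.re_ofReal_mul]
  have hrek : (w ^ k).re = ‖w ^ k‖ := by
    rw [norm_pow]
    exact mul_left_cancel₀ hck ((sum_eq_sum_iff_of_le hle).mp hre k hk)
  rw [Complex.eq_coe_norm_of_nonneg (Complex.re_eq_norm.mp hrek), norm_pow, Complex.ofReal_pow]

end NonnegWeights

lemma eq_one_of_pow_eq_one_of_gcd_eq_one {M : Type*} [Monoid M] {g : M} {S : Finset ℕ}
    (hg : ∀ k ∈ S, g ^ k = 1) (hS : S.gcd id = 1) : g = 1 :=
  orderOf_eq_one_iff.mp <| Nat.dvd_one.mp <|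
    hS ▸ dvd_gcd fun k hk => orderOf_dvd_of_pow_eq_one (hg k hk)

lemma spectrallyPerron_companionOf_of_gcd_eq_one {n : ℕ} {c : ℕ → ℝ}
    (hc : ∀ k ∈ Icc 1 n, 0 ≤ c k) (hgcd : ((Icc 1 n).filter (fun k => c k ≠ 0)).gcd id = 1) :
    SpectrallyPerron (companionOf n c) := by
  obtain ⟨m, hm⟩ : ((Icc 1 n).filter (fun k => c k ≠ 0)).Nonempty :=
    nonempty_of_ne_empty fun h => by simp [h] at hgcd
  rw [mem_filter] at hm
  have hs : 0 ∉ Icc 1 n := by simp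
  obtain ⟨u, hu, hcu⟩ := exists_pos_sum_mul_pow_eq_one hs hc hm.1 hm.2
  have hρ : 0 < u⁻¹ := inv_pos.mpr hu
  have hroot : (polyOf n c).IsRoot u⁻¹ := by
    rw [IsRoot, eval_polyOf, pow_sub_sum_mul_pow_eq_zero_iff hρ.ne', inv_inv, hcu]
  refine ⟨u⁻¹, hρ, ?_, fun z hz hzρ => ?_⟩
  · rw [specPoly_companionOf]
    exact (eq_rootMultiplicity_map (algebraMap ℝ ℂ).injective _).symm.trans
      (rootMultiplicity_polyOf_eq_one hc hρ hroot)
  rcases eq_or_ne z 0 with rfl | hz0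
  · simpa using hρ
  rw [specPoly_companionOf, IsRoot, eval_map_polyOf, pow_sub_sum_mul_pow_eq_zero_iff hz0] at hz
  have hle : u ≤ ‖z⁻¹‖ := le_norm_of_sum_mul_pow_eq_one hs hc hu.le hcu hz
  refine (le_inv_of_le_inv₀ hu (norm_inv z ▸ hle)).lt_of_ne fun hnorm => hzρ ?_
  have hnorm' : ‖z⁻¹‖ = u := by rw [norm_inv, hnorm, inv_inv]
  have hroot1 : ∀ k ∈ (Icc 1 n).filter (fun k => c k ≠ 0), ((u : ℂ) * z) ^ k = 1 := by
    intro k hk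
    rw [mem_filter] at hk
    have hzk := pow_eq_norm_pow_of_sum_mul_pow_eq_one hc hz (hnorm' ▸ hcu) hk.1 hk.2
    rw [hnorm', inv_pow] at hzk
    rw [mul_pow, ← inv_inv (z ^ k), hzk, mul_inv_cancel₀ (by exact_mod_cast (pow_pos hu k).ne')]
  rw [Complex.ofReal_inv,
    eq_inv_of_mul_eq_one_right (eq_one_of_pow_eq_one_of_gcd_eq_one hroot1 hgcd)]

lemma gcd_eq_one_of_spectrallyPerron_companionOf {n : ℕ} {c : ℕ → ℝ}
    (h : SpectrallyPerron (companionOf n c)) :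
    ((Icc 1 n).filter (fun k => c k ≠ 0)).gcd id = 1 := by
  obtain ⟨ρ, hρ, hmult, hdom⟩ := h
  rw [specPoly_companionOf] at hmult hdom
  have hroot : ((polyOf n c).map (algebraMap ℝ ℂ)).IsRoot ρ :=
    (rootMultiplicity_pos ((polyOf_monic n c).map _).ne_zero).mp (by omega)
  set d := ((Icc 1 n).filter (fun k => c k ≠ 0)).gcd id
  have hd0 : d ≠ 0 := by
    have hρ0 : (ρ : ℂ) ≠ 0 := Complex.ofReal_ne_zero.mpr hρ.ne'
    rw [IsRoot, eval_map_polyOf, pow_sub_sum_mul_pow_eq_zero_iff hρ0] at hroot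
    obtain ⟨k, hk, hck⟩ := exists_ne_zero_of_sum_ne_zero (hroot.trans_ne one_ne_zero)
    have hkd : d ∣ k := gcd_dvd (mem_filter.mpr ⟨hk, by exact_mod_cast left_ne_zero_of_mul hck⟩)
    rintro hd
    rw [hd, zero_dvd_iff] at hkd
    exact absurd (mem_Icc.mp hk).1 (by omega)
  by_contra hd1
  obtain ⟨ω, hω⟩ : ∃ ω : ℂ, IsPrimitiveRoot ω d := ⟨_, Complex.isPrimitiveRoot_exp d hd0⟩
  have hrotate : ((polyOf n c).map (algebraMap ℝ ℂ)).IsRoot (ω * ρ) := by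
    rw [IsRoot, eval_map_polyOf_mul (fun k hk hck => (hω.pow_eq_one_iff_dvd k).mpr
      (gcd_dvd (mem_filter.mpr ⟨hk, hck⟩))), hroot.eq_zero, mul_zero]
  have hne : ω * ρ ≠ ρ := fun h => hω.ne_one (by omega)
    (mul_right_cancel₀ (Complex.ofReal_ne_zero.mpr hρ.ne') (h.trans (one_mul _).symm))
  have hlt := hdom _ hrotate hne
  rw [norm_mul, hω.norm'_eq_one hd0, one_mul, Complex.norm_real, Real.norm_of_nonneg hρ.le] at hlt
  exact lt_irrefl _ hlt

theorem ostrovsky_spectrally_perron_general (n : ℕ) (c : ℕ → ℝ)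
    (hc : ∀ k ∈ Finset.Icc 1 n, 0 ≤ c k) :
    SpectrallyPerron (companionOf n c) ↔
      ((Finset.Icc 1 n).filter (fun k => c k ≠ 0)).gcd id = 1 :=
  ⟨gcd_eq_one_of_spectrallyPerron_companionOf, spectrallyPerron_companionOf_of_gcd_eq_one hc⟩

/-- Ostrovsky: `p` is spectrally Perron iff `d := gcd {k : c k ≠ 0} = 1`. -/
theorem ostrovsky_spectrally_perron (n : ℕ) (hn : 1 ≤ n) (c : ℕ → ℝ)
    (hc : ∀ k ∈ Finset.Icc 1 n, 0 ≤ c k) :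
    SpectrallyPerron (companionOf n c) ↔
      ((Finset.Icc 1 n).filter (fun k => c k ≠ 0)).gcd id = 1 :=
  ostrovsky_spectrally_perron_general n c hc
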